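/- arXiv:2007.11728 — 2 statements merged into one kernel-verified Lean document; each statement's English description precedes it below -/
import Mathlib

section
/- Let λ : [0,L] → ℝ³ be continuous and suppose that for every continuous pair of functions g₁, g₂ : [0,L] → ℝ and every constant vector Ū ∈ ℝ³, the power ∫₀ᴸ (Ū + ∫₀^{s'} (g₁(s) n₁(s) + g₂(s) n₂(s)) ds) · λ(s') ds' vanishes, where (τ(s), n₁(s), n₂(s)) is a continuous right-handed orthonormal frame. Then ∫₀ᴸ λ(s') ds' = 0 and for every s ∈ [0,L], the vector ∫ₛᴸ λ(s') ds' is parallel to τ(s), i.e., (∫ₛᴸ λ ds')·n₁(s) = (∫ₛᴸ λ ds')·n₂(s) = 0. -/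
/-!
Taking `g₁ = g₂ = 0` and `U = ∫₀ᴸ λ`, the work is `U ⬝ᵥ U`, so the total force vanishes.
Integrating by parts, the work of the motion with `U = 0` generated by `h = g₁ n₁ + g₂ n₂` is
`∫₀ᴸ h ⬝ᵥ Λ` with `Λ s = ∫ₛᴸ λ`. Choosing `gᵢ = Λ ⬝ᵥ nᵢ` (extended continuously off `[0, L]`)
turns it into `∫₀ᴸ (Λ ⬝ᵥ n₁)² + (Λ ⬝ᵥ n₂)²`, so both components vanish on `[0, L]`.
-/

open Matrix MeasureTheory

def cross3 (u v : Fin 3 → ℝ) : Fin 3 → ℝ :=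
  ![u 1 * v 2 - u 2 * v 1, u 2 * v 0 - u 0 * v 2, u 0 * v 1 - u 1 * v 0]

open Set intervalIntegral

variable {ι : Type*} [Fintype ι]

theorem HasDerivAt.dotProduct {f g : ℝ → ι → ℝ} {f' g' : ι → ℝ} {x : ℝ}
    (hf : HasDerivAt f f' x) (hg : HasDerivAt g g' x) :
    HasDerivAt (fun y => f y ⬝ᵥ g y) (f' ⬝ᵥ g x + f x ⬝ᵥ g') x := by
  simp only [_root_.dotProduct, ← Finset.sum_add_distrib]
  exact HasDerivAt.fun_sum fun i _ => (hasDerivAt_pi.1 hf i).mul (hasDerivAt_pi.1 hg i)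

theorem ContinuousOn.dotProduct {X : Type*} [TopologicalSpace X] {f g : X → ι → ℝ} {s : Set X}
    (hf : ContinuousOn f s) (hg : ContinuousOn g s) : ContinuousOn (fun x => f x ⬝ᵥ g x) s := by
  simp only [_root_.dotProduct]
  fun_prop

theorem dotProduct_intervalIntegral {f : ℝ → ι → ℝ} {a b : ℝ}
    (hf : IntervalIntegrable f volume a b) (v : ι → ℝ) :
    v ⬝ᵥ ∫ x in a..b, f x = ∫ x in a..b, v ⬝ᵥ f x :=
  ((dotProductBilin ℝ ℝ v).toContinuousLinearMap.intervalIntegral_comp_comm hf).symm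

theorem ContinuousOn.exists_continuous_eqOn_Icc {α β : Type*} [LinearOrder α]
    [TopologicalSpace α] [OrderTopology α] [TopologicalSpace β] {f : α → β} {a b : α}
    (hf : ContinuousOn f (Icc a b)) (hab : a ≤ b) :
    ∃ g : α → β, Continuous g ∧ EqOn g f (Icc a b) :=
  ⟨IccExtend hab ((Icc a b).domRestrict f),
    (continuousOn_iff_continuous_domRestrict.1 hf).Icc_extend',
    fun _ hx => IccExtend_of_mem hab _ hx⟩

theorem ContinuousOn.continuousOn_primitive_Icc {E : Type*} [NormedAddCommGroup E]
    [NormedSpace ℝ E] {f : ℝ → E} {a b : ℝ} (hab : a ≤ b) (hf : ContinuousOn f (Icc a b)) :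
    ContinuousOn (fun x => ∫ t in a..x, f t) (Icc a b) := by
  simpa only [uIcc_of_le hab] using continuousOn_primitive_interval (a := a) (b := b)
    (by simpa only [uIcc_of_le hab] using hf.integrableOn_Icc (μ := volume))

theorem ContinuousOn.continuousOn_primitive_Icc_left {E : Type*} [NormedAddCommGroup E]
    [NormedSpace ℝ E] {f : ℝ → E} {a b : ℝ} (hab : a ≤ b) (hf : ContinuousOn f (Icc a b)) :
    ContinuousOn (fun x => ∫ t in x..b, f t) (Icc a b) := by
  simpa only [uIcc_of_le hab] using continuousOn_primitive_interval_left (a := a) (b := b)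
    (by simpa only [uIcc_of_le hab] using hf.integrableOn_Icc (μ := volume))

theorem ContinuousOn.eqOn_zero_of_intervalIntegral_eq_zero {f : ℝ → ℝ} {a b : ℝ}
    (hf : ContinuousOn f (Icc a b)) (hab : a < b) (hf₀ : ∀ x ∈ Icc a b, 0 ≤ f x)
    (hint : ∫ x in a..b, f x = 0) : EqOn f 0 (Icc a b) := by
  intro c hc
  by_contra hne
  have := integral_lt_integral_of_continuousOn_of_le_of_exists_lt hab continuousOn_const hf
    (fun x hx => hf₀ x (Ioc_subset_Icc_self hx)) ⟨c, hc, (hf₀ c hc).lt_of_ne' hne⟩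
  simp [hint] at this

theorem integral_primitive_dotProduct_eq_integral_dotProduct_tail {f g : ℝ → ι → ℝ} {a b : ℝ}
    (hab : a ≤ b) (hf : ContinuousOn f (Icc a b)) (hg : ContinuousOn g (Icc a b)) :
    ∫ x in a..b, (∫ t in a..x, f t) ⬝ᵥ g x = ∫ x in a..b, f x ⬝ᵥ ∫ t in x..b, g t := by
  set F := fun x => ∫ t in a..x, f t
  set G := fun x => ∫ t in x..b, g t
  have hFc : ContinuousOn F (Icc a b) := hf.continuousOn_primitive_Icc hab
  have hGc : ContinuousOn G (Icc a b) := hg.continuousOn_primitive_Icc_left hab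
  have hderiv : ∀ x ∈ Ioo a b,
      HasDerivAt (fun y => F y ⬝ᵥ G y) (f x ⬝ᵥ G x - F x ⬝ᵥ g x) x := by
    intro x hx
    have hsub : ∀ y ∈ Icc a b, uIcc a y ⊆ Icc a b ∧ uIcc y b ⊆ Icc a b := fun y hy =>
      ⟨uIcc_subset_Icc (left_mem_Icc.2 hab) hy, uIcc_subset_Icc hy (right_mem_Icc.2 hab)⟩
    have hx' := Ioo_subset_Icc_self hx
    have hF : HasDerivAt F (f x) x :=
      integral_hasDerivAt_right ((hf.mono (hsub x hx').1).intervalIntegrable)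
        ((hf.mono Ioo_subset_Icc_self).stronglyMeasurableAtFilter isOpen_Ioo x hx)
        (hf.continuousAt (Icc_mem_nhds hx.1 hx.2))
    have hG : HasDerivAt G (-g x) x :=
      integral_hasDerivAt_left ((hg.mono (hsub x hx').2).intervalIntegrable)
        ((hg.mono Ioo_subset_Icc_self).stronglyMeasurableAtFilter isOpen_Ioo x hx)
        (hg.continuousAt (Icc_mem_nhds hx.1 hx.2))
    simpa only [dotProduct_neg, ← sub_eq_add_neg] using hF.dotProduct hG
  have hint₁ : IntervalIntegrable (fun x => f x ⬝ᵥ G x) volume a b :=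
    (hf.dotProduct hGc).intervalIntegrable_of_Icc hab
  have hint₂ : IntervalIntegrable (fun x => F x ⬝ᵥ g x) volume a b :=
    (hFc.dotProduct hg).intervalIntegrable_of_Icc hab
  have hftc := integral_eq_sub_of_hasDeriv_right_of_le hab (hFc.dotProduct hGc)
    (fun x hx => (hderiv x hx).hasDerivWithinAt) (hint₁.sub hint₂)
  rw [integral_sub hint₁ hint₂] at hftc
  simp only [F, G, integral_same, dotProduct_zero, zero_dotProduct, sub_zero] at hftc
  exact (sub_eq_zero.1 hftc).symm

theorem stmt_4_general (L : ℝ) (hL : 0 < L)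
    (lam n₁ n₂ : ℝ → Fin 3 → ℝ)
    (hlam : ContinuousOn lam (Set.Icc 0 L))
    (hn₁c : ContinuousOn n₁ (Set.Icc 0 L))
    (hn₂c : ContinuousOn n₂ (Set.Icc 0 L))
    (hpower : ∀ g₁ g₂ : ℝ → ℝ, Continuous g₁ → Continuous g₂ → ∀ U : Fin 3 → ℝ,
      (∫ s' in (0:ℝ)..L,
        (U + ∫ s in (0:ℝ)..s', (g₁ s • n₁ s + g₂ s • n₂ s)) ⬝ᵥ (lam s')) = 0) :
    (∫ s' in (0:ℝ)..L, lam s') = 0 ∧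
    ∀ s ∈ Set.Icc (0:ℝ) L,
      (∫ s' in s..L, lam s') ⬝ᵥ (n₁ s) = 0 ∧ (∫ s' in s..L, lam s') ⬝ᵥ (n₂ s) = 0 := by
  have htotal : (∫ s' in (0:ℝ)..L, lam s') = 0 := by
    have hrigid := hpower 0 0 continuous_const continuous_const (∫ s' in (0:ℝ)..L, lam s')
    simp only [Pi.zero_apply, zero_smul, add_zero, intervalIntegral.integral_zero] at hrigid
    rw [← dotProduct_intervalIntegral (hlam.intervalIntegrable_of_Icc hL.le)] at hrigid
    exact dotProduct_self_eq_zero.1 hrigid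
  refine ⟨htotal, ?_⟩
  set Λ : ℝ → Fin 3 → ℝ := fun s => ∫ s' in s..L, lam s'
  have hΛ : ContinuousOn Λ (Icc 0 L) := hlam.continuousOn_primitive_Icc_left hL.le
  have hΛ₁ := hΛ.dotProduct hn₁c
  have hΛ₂ := hΛ.dotProduct hn₂c
  obtain ⟨g₁, hg₁, hg₁Λ⟩ := hΛ₁.exists_continuous_eqOn_Icc hL.le
  obtain ⟨g₂, hg₂, hg₂Λ⟩ := hΛ₂.exists_continuous_eqOn_Icc hL.le
  have hwork := hpower g₁ g₂ hg₁ hg₂ 0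
  simp only [zero_add] at hwork
  rw [integral_primitive_dotProduct_eq_integral_dotProduct_tail
    (f := fun s => g₁ s • n₁ s + g₂ s • n₂ s) hL.le
    ((hg₁.continuousOn.smul hn₁c).add (hg₂.continuousOn.smul hn₂c)) hlam] at hwork
  have hsq : ∫ s in (0:ℝ)..L, ((Λ s ⬝ᵥ n₁ s) ^ 2 + (Λ s ⬝ᵥ n₂ s) ^ 2) = 0 := by
    refine Eq.trans (integral_congr fun s hs => ?_) hwork
    rw [uIcc_of_le hL.le] at hs
    simp only [add_dotProduct, smul_dotProduct, smul_eq_mul, hg₁Λ hs, hg₂Λ hs,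
      dotProduct_comm (n₁ s), dotProduct_comm (n₂ s)]
    ring
  intro s hs
  have hs0 := ((hΛ₁.pow 2).add (hΛ₂.pow 2)).eqOn_zero_of_intervalIntegral_eq_zero hL
    (fun _ _ => add_nonneg (sq_nonneg _) (sq_nonneg _)) hsq hs
  obtain ⟨h₁, h₂⟩ := (add_eq_zero_iff_of_nonneg (sq_nonneg _) (sq_nonneg _)).1 hs0
  exact ⟨pow_eq_zero_iff two_ne_zero |>.1 h₁, pow_eq_zero_iff two_ne_zero |>.1 h₂⟩

/-- if the constraint force `λ` performs no work on any inextensible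
motion (any `Ū`, `g₁`, `g₂`), then `∫₀ᴸ λ = 0` and `∫ₛᴸ λ` is orthogonal to `n₁(s)`
and `n₂(s)`, i.e. parallel to `τ(s)`. -/
theorem stmt_4 (L : ℝ) (hL : 0 < L)
    (lam τ n₁ n₂ : ℝ → Fin 3 → ℝ)
    (hlam : ContinuousOn lam (Set.Icc 0 L))
    (hτc : ContinuousOn τ (Set.Icc 0 L))
    (hn₁c : ContinuousOn n₁ (Set.Icc 0 L))
    (hn₂c : ContinuousOn n₂ (Set.Icc 0 L))
    (hunit : ∀ s ∈ Set.Icc (0:ℝ) L,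
      (τ s) ⬝ᵥ (τ s) = 1 ∧ (n₁ s) ⬝ᵥ (n₁ s) = 1 ∧ (n₂ s) ⬝ᵥ (n₂ s) = 1)
    (horth : ∀ s ∈ Set.Icc (0:ℝ) L,
      (τ s) ⬝ᵥ (n₁ s) = 0 ∧ (τ s) ⬝ᵥ (n₂ s) = 0 ∧ (n₁ s) ⬝ᵥ (n₂ s) = 0)
    (hframe : ∀ s ∈ Set.Icc (0:ℝ) L, cross3 (τ s) (n₁ s) = n₂ s)
    (hpower : ∀ g₁ g₂ : ℝ → ℝ, Continuous g₁ → Continuous g₂ → ∀ U : Fin 3 → ℝ,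
      (∫ s' in (0:ℝ)..L,
        (U + ∫ s in (0:ℝ)..s', (g₁ s • n₁ s + g₂ s • n₂ s)) ⬝ᵥ (lam s')) = 0) :
    (∫ s' in (0:ℝ)..L, lam s') = 0 ∧
    ∀ s ∈ Set.Icc (0:ℝ) L,
      (∫ s' in s..L, lam s') ⬝ᵥ (n₁ s) = 0 ∧ (∫ s' in s..L, lam s') ⬝ᵥ (n₂ s) = 0 :=
  stmt_4_general L hL lam n₁ n₂ hlam hn₁c hn₂c hpower
end

section
/- The cross-linker force densities f^{CL,i}_p and f^{CL,j}_q defined by the symmetric Gaussian-smoothed spring formula exert zero net force and zero net torque: Σ_p f^{CL,i}_p w_p + Σ_q f^{CL,j}_q w_q = 0 and Σ_p (X^i_p × f^{CL,i}_p) w_p + Σ_q (X^j_q × f^{CL,j}_q) w_q = 0, for any choice of the smoothing weights δ_h and quadrature weights w. -/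
/-!
Both sums expand into double sums over pairs `(p, q)` with the common weight
`C (a_p w_p) (b_q w_q)`. The two fibers' contributions of each pair cancel: for the force,
`(X - Y) + (Y - X) = 0`; for the torque, `X × (X - Y) + Y × (Y - X) = -(X × Y + Y × X) = 0`.
-/

open Matrix Finset

theorem cross3_eq_crossProduct (u v : Fin 3 → ℝ) : cross3 u v = u ⨯₃ v := by
  rw [cross_apply]; rfl

theorem sum_sum_smul_add_sum_sum_smul_eq_zero {ι κ R M : Type*} [Fintype ι] [Fintype κ]
    [Semiring R] [AddCommMonoid M] [Module R M] (c : ι → κ → R) (g : ι → κ → M)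
    (h : κ → ι → M) (hgh : ∀ p q, g p q + h q p = 0) :
    ∑ p, ∑ q, c p q • g p q + ∑ q, ∑ p, c p q • h q p = 0 := by
  rw [sum_comm (f := fun q p => c p q • h q p), ← sum_add_distrib]
  refine sum_eq_zero fun p _ => ?_
  simp only [← sum_add_distrib, ← smul_add, hgh, smul_zero, sum_const_zero]

theorem cross_sub_add_cross_sub_eq_zero {R : Type*} [CommRing R] (u v : Fin 3 → R) :
    u ⨯₃ (u - v) + v ⨯₃ (v - u) = 0 := by
  rw [map_sub, map_sub, cross_self, cross_self, ← cross_anticomm]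
  abel

theorem stmt_15_general (N : ℕ) (Xi Xj : Fin N → Fin 3 → ℝ) (w a b : Fin N → ℝ)
    (C : ℝ) (fi fj : Fin N → Fin 3 → ℝ)
    (hfi : ∀ p, fi p = (C * a p) • ∑ q, (b q * w q) • (Xi p - Xj q))
    (hfj : ∀ q, fj q = (C * b q) • ∑ p, (a p * w p) • (Xj q - Xi p)) :
    ((∑ p, w p • fi p) + (∑ q, w q • fj q) = 0) ∧
    ((∑ p, w p • cross3 (Xi p) (fi p)) + (∑ q, w q • cross3 (Xj q) (fj q)) = 0) := by
  set c : Fin N → Fin N → ℝ := fun p q => C * (a p * w p) * (b q * w q)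
  have hwfi : ∀ p, w p • fi p = ∑ q, c p q • (Xi p - Xj q) := fun p => by
    simp only [hfi, smul_sum, smul_smul, c]
    exact sum_congr rfl fun q _ => by congr 1; ring
  have hwfj : ∀ q, w q • fj q = ∑ p, c p q • (Xj q - Xi p) := fun q => by
    simp only [hfj, smul_sum, smul_smul, c]
    exact sum_congr rfl fun p _ => by congr 1; ring
  simp only [cross3_eq_crossProduct, ← map_smul (crossProduct _)]
  simp only [hwfi, hwfj, map_sum, map_smul]
  exact ⟨sum_sum_smul_add_sum_sum_smul_eq_zero c _ _ fun p q => by abel,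
    sum_sum_smul_add_sum_sum_smul_eq_zero c _ _ fun p q => cross_sub_add_cross_sub_eq_zero _ _⟩

/-- the Gaussian-smoothed cross-linker force densities exert zero net
force and zero net torque on the pair of fibers they connect, for any smoothing
weights and quadrature weights. -/
theorem stmt_15 (N : ℕ) (Xi Xj : Fin N → Fin 3 → ℝ) (w a b : Fin N → ℝ)
    (hw : ∀ p, 0 < w p)
    (hna : ∑ p, a p * w p = 1) (hnb : ∑ q, b q * w q = 1)
    (C : ℝ) (fi fj : Fin N → Fin 3 → ℝ)
    (hfi : ∀ p, fi p = (C * a p) • ∑ q, (b q * w q) • (Xi p - Xj q))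
    (hfj : ∀ q, fj q = (C * b q) • ∑ p, (a p * w p) • (Xj q - Xi p)) :
    ((∑ p, w p • fi p) + (∑ q, w q • fj q) = 0) ∧
    ((∑ p, w p • cross3 (Xi p) (fi p)) + (∑ q, w q • cross3 (Xj q) (fj q)) = 0) :=
  stmt_15_general N Xi Xj w a b C fi fj hfi hfj
end
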